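/- Assume A² is dense in A. A bounded linear map D : A ⋈^id A → (A ⋈^id A)* is a derivation if and only if there exist derivations D₁, D₂ : A → A* such that D(a,b) = (D₁(a) + D₂(b), D₂(a) + D₂(b)) for all a, b ∈ A (under the identification (A ⋈^id A)* ≅ A* × A*). Moreover, D is the inner derivation implemented by (f,g) if and only if D₁ is inner implemented by f and D₂ is inner implemented by g. -/

import Mathlib

open NormedSpace

/-- The multiplication of `A ⋈^id A`: `(a,b)·(a',b') = (aa', ab' + ba' + bb')`. -/
def amulId {A : Type*} [NonUnitalNormedRing A] (x y : A × A) : A × A :=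
  (x.1 * y.1, x.1 * y.2 + x.2 * y.1 + x.2 * y.2)

/-- `D₁ : A → A*` is a derivation: `D₁(ab) = a·D₁(b) + D₁(a)·b` pointwise, where
`⟨a·f, c⟩ = f(ca)` and `⟨f·b, c⟩ = f(bc)`. -/
def IsDerToDual {A : Type*} [NonUnitalNormedRing A] [NormedSpace ℂ A]
    (D₁ : A →L[ℂ] StrongDual ℂ A) : Prop :=
  ∀ a b c : A, D₁ (a * b) c = D₁ b (c * a) + D₁ a (b * c)

/-- `D : A ⋈^id A → (A ⋈^id A)* ≅ A* × A*` is a derivation, stated by pairing against an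
arbitrary `(c,d)`, for the dual bimodule actions
`(a,b)·(f,g) = (a·f + b·g, (a+b)·g)` and `(f,g)·(a,b) = (f·a + g·b, g·(a+b))`. -/
def IsDerAmalgId {A : Type*} [NonUnitalNormedRing A] [NormedSpace ℂ A]
    (D : (A × A) →L[ℂ] (StrongDual ℂ A × StrongDual ℂ A)) : Prop :=
  ∀ a b a' b' c d : A,
    (D (amulId (a, b) (a', b'))).1 c + (D (amulId (a, b) (a', b'))).2 d
      = ((D (a', b')).1 (c * a) + (D (a', b')).2 (c * b) + (D (a', b')).2 (d * (a + b)))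
        + ((D (a, b)).1 (a' * c) + (D (a, b)).2 (b' * c) + (D (a, b)).2 ((a' + b') * d))

/-!
Testing the derivation identity of `D` on pure elements `(a,0)`, `(0,b)` against `(c,0)`,
`(0,d)` shows that `D₁ := π₁ ∘ D ∘ ι₁` and `D₂ := π₂ ∘ D ∘ ι₂` are derivations, and that the
mixed components `π₁ ∘ D ∘ ι₂` and `π₂ ∘ D ∘ ι₁` take the same values as `D₂` on products `bb'`.
By continuity and density of `A²` they equal `D₂`. The inner part is a direct computation.
-/

theorem ContinuousLinearMap.ext_on_mul {R A E : Type*} [Semiring R]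
    [NonUnitalNonAssocSemiring A] [TopologicalSpace A] [Module R A]
    [AddCommMonoid E] [TopologicalSpace E] [T2Space E] [Module R E]
    (hA2 : closure ((Submodule.span R {x : A | ∃ a b : A, x = a * b} :
      Submodule R A) : Set A) = Set.univ)
    {T S : A →L[R] E} (h : ∀ a b : A, T (a * b) = S (a * b)) : T = S :=
  ext_on (dense_iff_closure_eq.2 hA2) (by rintro _ ⟨a, b, rfl⟩; exact h a b)

namespace IsDerAmalgId

open ContinuousLinearMap

variable {A : Type*} [NonUnitalNormedRing A] [NormedSpace ℂ A]
  {D : (A × A) →L[ℂ] (StrongDual ℂ A × StrongDual ℂ A)}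

noncomputable abbrev fstInl (D : (A × A) →L[ℂ] (StrongDual ℂ A × StrongDual ℂ A)) :
    A →L[ℂ] StrongDual ℂ A :=
  fst ℂ _ _ ∘L D ∘L inl ℂ A A

noncomputable abbrev sndInr (D : (A × A) →L[ℂ] (StrongDual ℂ A × StrongDual ℂ A)) :
    A →L[ℂ] StrongDual ℂ A :=
  snd ℂ _ _ ∘L D ∘L inr ℂ A A

theorem isDerToDual_fstInl (hD : IsDerAmalgId D) : IsDerToDual (fstInl D) := by
  intro a b c
  simpa [amulId] using hD a 0 b 0 c 0

theorem isDerToDual_sndInr (hD : IsDerAmalgId D) : IsDerToDual (sndInr D) := by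
  intro a b c
  simpa [amulId] using hD 0 a 0 b 0 c

theorem snd_inl_eq_sndInr (hA2 : closure ((Submodule.span ℂ {x : A | ∃ a b : A, x = a * b} :
      Submodule ℂ A) : Set A) = Set.univ) (hD : IsDerAmalgId D) (a : A) :
    (D (a, 0)).2 = sndInr D a := by
  refine ext_on_mul hA2 fun b d => ?_
  have hmixed : (D (0, a * b)).2 d = (D (0, b)).2 (d * a) + (D (a, 0)).2 (b * d) := by
    simpa [amulId] using hD a 0 0 b 0 d
  have hpure := isDerToDual_sndInr hD a b d
  simp only [sndInr, comp_apply, inr_apply, coe_snd'] at hpure ⊢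
  linear_combination hpure - hmixed

theorem fst_inr_eq_sndInr (hA2 : closure ((Submodule.span ℂ {x : A | ∃ a b : A, x = a * b} :
      Submodule ℂ A) : Set A) = Set.univ) (hD : IsDerAmalgId D) (b : A) :
    (D (0, b)).1 = sndInr D b := by
  suffices h : fst ℂ _ _ ∘L D ∘L inr ℂ A A = sndInr D from congr($h b)
  refine ext_on_mul hA2 fun x y => ContinuousLinearMap.ext fun c => ?_
  have hfst : (D (0, x * y)).1 c = (D (0, y)).2 (c * x) + (D (0, x)).2 (y * c) := by
    simpa [amulId] using hD 0 x 0 y c 0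
  have hsnd := isDerToDual_sndInr hD x y c
  simp only [sndInr, comp_apply, inr_apply, coe_fst', coe_snd'] at hsnd ⊢
  rw [hfst, hsnd]

theorem apply_eq (hA2 : closure ((Submodule.span ℂ {x : A | ∃ a b : A, x = a * b} :
      Submodule ℂ A) : Set A) = Set.univ) (hD : IsDerAmalgId D) (a b : A) :
    D (a, b) = (fstInl D a + sndInr D b, sndInr D a + sndInr D b) := by
  have hsplit : D (a, b) = D (a, 0) + D (0, b) := by
    rw [← map_add, Prod.mk_add_mk, add_zero, zero_add]
  rw [hsplit]
  exact Prod.ext (congrArg ((D (a, 0)).1 + ·) (fst_inr_eq_sndInr hA2 hD b))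
    (congrArg (· + (D (0, b)).2) (snd_inl_eq_sndInr hA2 hD a))

end IsDerAmalgId

theorem isDerAmalgId_of_apply_eq {A : Type*} [NonUnitalNormedRing A] [NormedSpace ℂ A]
    {D : (A × A) →L[ℂ] (StrongDual ℂ A × StrongDual ℂ A)}
    {D₁ D₂ : A →L[ℂ] StrongDual ℂ A}
    (h₁ : IsDerToDual D₁) (h₂ : IsDerToDual D₂)
    (hD : ∀ a b : A, D (a, b) = (D₁ a + D₂ b, D₂ a + D₂ b)) : IsDerAmalgId D := by
  intro a b a' b' c d
  simp only [amulId, hD, mul_add, add_mul, map_add, add_apply, h₁ _ _ _, h₂ _ _ _]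
  ring

theorem isInner_iff_of_apply_eq {A : Type*} [NonUnitalNormedRing A] [NormedSpace ℂ A]
    {D : (A × A) →L[ℂ] (StrongDual ℂ A × StrongDual ℂ A)}
    {D₁ D₂ : A →L[ℂ] StrongDual ℂ A}
    (hD : ∀ a b : A, D (a, b) = (D₁ a + D₂ b, D₂ a + D₂ b)) (f g : StrongDual ℂ A) :
    (∀ a b c d : A,
        (D (a, b)).1 c + (D (a, b)).2 d
          = (f (c * a) + g (c * b) + g (d * (a + b)))
            - (f (a * c) + g (b * c) + g ((a + b) * d))) ↔
      ((∀ a c : A, D₁ a c = f (c * a) - f (a * c)) ∧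
       (∀ a c : A, D₂ a c = g (c * a) - g (a * c))) := by
  constructor
  · intro hin
    exact ⟨fun a c => by simpa [hD] using hin a 0 c 0,
      fun b d => by simpa [hD] using hin 0 b 0 d⟩
  · rintro ⟨hf, hg⟩ a b c d
    simp only [hD, add_apply, hf, hg, mul_add, add_mul, map_add]
    ring

theorem amalgId_derivations_general {A : Type*} [NonUnitalNormedRing A] [NormedSpace ℂ A]
    (hA2 : closure ((Submodule.span ℂ {x : A | ∃ a b : A, x = a * b} :
      Submodule ℂ A) : Set A) = Set.univ)
    (D : (A × A) →L[ℂ] (StrongDual ℂ A × StrongDual ℂ A)) :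
    (IsDerAmalgId D ↔
      ∃ D₁ D₂ : A →L[ℂ] StrongDual ℂ A, IsDerToDual D₁ ∧ IsDerToDual D₂ ∧
        ∀ a b : A, D (a, b) = (D₁ a + D₂ b, D₂ a + D₂ b)) ∧
    (∀ (D₁ D₂ : A →L[ℂ] StrongDual ℂ A) (f g : StrongDual ℂ A), IsDerToDual D₁ → IsDerToDual D₂ →
      (∀ a b : A, D (a, b) = (D₁ a + D₂ b, D₂ a + D₂ b)) →
      ((∀ a b c d : A,
          (D (a, b)).1 c + (D (a, b)).2 d
            = (f (c * a) + g (c * b) + g (d * (a + b)))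
              - (f (a * c) + g (b * c) + g ((a + b) * d))) ↔
        ((∀ a c : A, D₁ a c = f (c * a) - f (a * c)) ∧
         (∀ a c : A, D₂ a c = g (c * a) - g (a * c))))) := by
  refine ⟨⟨fun hD => ?_, ?_⟩, fun _ _ f g _ _ hform => isInner_iff_of_apply_eq hform f g⟩
  · exact ⟨_, _, hD.isDerToDual_fstInl, hD.isDerToDual_sndInr, hD.apply_eq hA2⟩
  · rintro ⟨_, _, h₁, h₂, hform⟩
    exact isDerAmalgId_of_apply_eq h₁ h₂ hform

/-- Assume `A²` is dense in `A`. A bounded linear map `D : A ⋈^id A → (A ⋈^id A)*` is a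
derivation if and only if `D(a,b) = (D₁(a) + D₂(b), D₂(a) + D₂(b))` for some derivations
`D₁, D₂ : A → A*`; moreover, `D` is the inner derivation implemented by `(f,g)` if and only
if `D₁` is inner implemented by `f` and `D₂` is inner implemented by `g`. -/
theorem amalgId_derivations {A : Type*} [NonUnitalNormedRing A] [NormedSpace ℂ A]
    [IsScalarTower ℂ A A] [SMulCommClass ℂ A A] [CompleteSpace A]
    (hA2 : closure ((Submodule.span ℂ {x : A | ∃ a b : A, x = a * b} :
      Submodule ℂ A) : Set A) = Set.univ)
    (D : (A × A) →L[ℂ] (StrongDual ℂ A × StrongDual ℂ A)) :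
    (IsDerAmalgId D ↔
      ∃ D₁ D₂ : A →L[ℂ] StrongDual ℂ A, IsDerToDual D₁ ∧ IsDerToDual D₂ ∧
        ∀ a b : A, D (a, b) = (D₁ a + D₂ b, D₂ a + D₂ b)) ∧
    (∀ (D₁ D₂ : A →L[ℂ] StrongDual ℂ A) (f g : StrongDual ℂ A), IsDerToDual D₁ → IsDerToDual D₂ →
      (∀ a b : A, D (a, b) = (D₁ a + D₂ b, D₂ a + D₂ b)) →
      ((∀ a b c d : A,
          (D (a, b)).1 c + (D (a, b)).2 d
            = (f (c * a) + g (c * b) + g (d * (a + b)))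
              - (f (a * c) + g (b * c) + g ((a + b) * d))) ↔
        ((∀ a c : A, D₁ a c = f (c * a) - f (a * c)) ∧
         (∀ a c : A, D₂ a c = g (c * a) - g (a * c))))) :=
  amalgId_derivations_general hA2 D
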